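/- arXiv:2004.05031 — 2 statements merged into one kernel-verified Lean document; each statement's English description precedes it below -/
import Mathlib

section
/- Let 0 < r < 1, x ∈ [0,1), and suppose 2r < x. Then every point w in the pseudohyperbolic disk D_phb(x,r) satisfies |arg w| ≤ arcsin( (r/x)·(1-x²)/(1-r²) ). -/
/-!
For real `x`, the pseudohyperbolic disk `D_phb(x, r)` is the Euclidean disk with center
`c = x (1 - r²) / (1 - r²x²)` and radius `ρ = r (1 - x²) / (1 - r²x²)`. Since `r < x` we have
`ρ ≤ c`, so this disk lies in the right half-plane, and the tangents to it from `0` bound the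
argument of its points by `arcsin (ρ / c) = arcsin ((r / x) (1 - x²) / (1 - r²))`.
-/

open Complex Real

theorem Real.abs_arcsin_le_arcsin {t s : ℝ} (h : |t| ≤ s) : |arcsin t| ≤ arcsin s := by
  obtain ⟨hlo, hhi⟩ := abs_le.mp h
  refine abs_le.mpr ⟨?_, monotone_arcsin hhi⟩
  rw [← arcsin_neg]
  exact monotone_arcsin hlo

namespace Complex

theorem abs_arg_le_arcsin {w : ℂ} {s : ℝ} (hre : 0 ≤ w.re) (him : |w.im / ‖w‖| ≤ s) :
    |arg w| ≤ arcsin s := by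
  rw [arg_of_re_nonneg hre]
  exact Real.abs_arcsin_le_arcsin him

section EuclideanDisk

variable {c ρ : ℝ} {w : ℂ}

theorem re_pos_of_norm_sub_lt (hρc : ρ ≤ c) (hw : ‖w - c‖ < ρ) : 0 < w.re := by
  have : c - w.re ≤ ‖w - c‖ :=
    calc c - w.re ≤ |(w - c).re| := by simpa using neg_le_abs (w.re - c)
      _ ≤ ‖w - c‖ := abs_re_le_norm _
  linarith

theorem mul_abs_im_le_of_norm_sub_lt (hρc : ρ ≤ c) (hw : ‖w - c‖ < ρ) :
    c * |w.im| ≤ ρ * ‖w‖ := by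
  have hρ : 0 < ρ := (norm_nonneg _).trans_lt hw
  have hc : 0 ≤ c := hρ.le.trans hρc
  have hdisk : (w.re - c) ^ 2 + w.im ^ 2 < ρ ^ 2 := by
    have := pow_lt_pow_left₀ hw (norm_nonneg _) two_ne_zero
    rwa [Complex.sq_norm, normSq_apply, sub_re, sub_im, ofReal_re, ofReal_im, sub_zero,
      ← sq, ← sq] at this
  have key : ρ ^ 2 * ‖w‖ ^ 2 - c ^ 2 * w.im ^ 2 = (ρ ^ 2 + c * (w.re - c)) ^ 2
      + (c ^ 2 - ρ ^ 2) * (ρ ^ 2 - (w.re - c) ^ 2 - w.im ^ 2) := by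
    rw [Complex.sq_norm, normSq_apply]
    ring
  have hsq : (c * |w.im|) ^ 2 ≤ (ρ * ‖w‖) ^ 2 := by
    rw [mul_pow, mul_pow, sq_abs]
    nlinarith [sq_nonneg (ρ ^ 2 + c * (w.re - c)),
      mul_nonneg (by nlinarith : 0 ≤ c ^ 2 - ρ ^ 2)
        (by linarith : 0 ≤ ρ ^ 2 - (w.re - c) ^ 2 - w.im ^ 2)]
  exact (pow_le_pow_iff_left₀ (by positivity) (by positivity) two_ne_zero).mp hsq

theorem abs_arg_le_arcsin_of_norm_sub_lt (hρc : ρ ≤ c) (hw : ‖w - c‖ < ρ) :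
    |arg w| ≤ arcsin (ρ / c) := by
  have hre := re_pos_of_norm_sub_lt hρc hw
  have hc : 0 < c := ((norm_nonneg _).trans_lt hw).trans_le hρc
  have hnorm : 0 < ‖w‖ := norm_pos_iff.mpr fun h => by simp [h] at hre
  refine abs_arg_le_arcsin hre.le ?_
  rw [abs_div, abs_norm, div_le_div_iff₀ hnorm hc, mul_comm]
  exact mul_abs_im_le_of_norm_sub_lt hρc hw

end EuclideanDisk

end Complex

noncomputable def phbCenter (x r : ℝ) : ℝ := x * (1 - r ^ 2) / (1 - r ^ 2 * x ^ 2)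

noncomputable def phbRadius (x r : ℝ) : ℝ := r * (1 - x ^ 2) / (1 - r ^ 2 * x ^ 2)

theorem mul_norm_sub_sq_sub_sq_mul_norm_one_sub_mul_sq (x r : ℝ) (w : ℂ) :
    (1 - r ^ 2 * x ^ 2) * (‖(x : ℂ) - w‖ ^ 2 - r ^ 2 * ‖1 - x * w‖ ^ 2) =
      ‖(1 - r ^ 2 * x ^ 2 : ℝ) * w - (x * (1 - r ^ 2) : ℝ)‖ ^ 2 - (r * (1 - x ^ 2)) ^ 2 := by
  simp only [Complex.sq_norm, normSq_apply, sub_re, sub_im, mul_re, mul_im, ofReal_re, ofReal_im,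
    one_re, one_im]
  ring

theorem norm_sub_phbCenter_lt_phbRadius {x r : ℝ} {w : ℂ} (hx : x ^ 2 ≤ 1)
    (hrx : r ^ 2 * x ^ 2 < 1) (h : ‖(x : ℂ) - w‖ < r * ‖1 - x * w‖) :
    ‖w - phbCenter x r‖ < phbRadius x r := by
  have hD : 0 < 1 - r ^ 2 * x ^ 2 := by linarith
  have hr : 0 < r := pos_of_mul_pos_left ((norm_nonneg _).trans_lt h) (norm_nonneg _)
  have hA : 0 ≤ r * (1 - x ^ 2) := mul_nonneg hr.le (sub_nonneg.2 hx)
  have hsq : ‖(x : ℂ) - w‖ ^ 2 - r ^ 2 * ‖1 - x * w‖ ^ 2 < 0 := by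
    rw [sub_neg, ← mul_pow]
    exact pow_lt_pow_left₀ h (norm_nonneg _) two_ne_zero
  have hscaled : ‖(1 - r ^ 2 * x ^ 2 : ℝ) * w - (x * (1 - r ^ 2) : ℝ)‖ < r * (1 - x ^ 2) := by
    rw [← pow_lt_pow_iff_left₀ (norm_nonneg _) hA two_ne_zero, ← sub_neg,
      ← mul_norm_sub_sq_sub_sq_mul_norm_one_sub_mul_sq]
    exact mul_neg_of_pos_of_neg hD hsq
  have hcenter : w - phbCenter x r =
      ((1 - r ^ 2 * x ^ 2 : ℝ) * w - (x * (1 - r ^ 2) : ℝ)) / (1 - r ^ 2 * x ^ 2 : ℝ) := by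
    rw [phbCenter, sub_div, mul_div_cancel_left₀ _ (ofReal_ne_zero.2 hD.ne'), ofReal_div]
  rw [hcenter, norm_div, norm_real, Real.norm_of_nonneg hD.le, phbRadius]
  exact div_lt_div_of_pos_right hscaled hD

theorem phbRadius_le_phbCenter {x r : ℝ} (hr : 0 ≤ r) (hrx : r ≤ x) (hD : r ^ 2 * x ^ 2 < 1) :
    phbRadius x r ≤ phbCenter x r := by
  unfold phbRadius phbCenter
  refine div_le_div_of_nonneg_right ?_ (by linarith)
  -- `x (1 - r²) - r (1 - x²) = (x - r) (1 + r x)`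
  nlinarith [mul_nonneg (sub_nonneg.2 hrx) (mul_nonneg hr (hr.trans hrx))]

theorem phbRadius_div_phbCenter {x r : ℝ} (hD : r ^ 2 * x ^ 2 ≠ 1) :
    phbRadius x r / phbCenter x r = r / x * (1 - x ^ 2) / (1 - r ^ 2) := by
  unfold phbRadius phbCenter
  rw [div_div_div_cancel_right₀ (sub_ne_zero.2 hD.symm), div_mul_eq_mul_div, div_div]

theorem arg_bound_on_pseudohyperbolic_disk_general (x r : ℝ) (hr0 : 0 < r)
    (hx1 : x < 1) (hrx : 2 * r < x) (w : ℂ) (hw : ‖w‖ < 1)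
    (hmem : ‖((x : ℂ) - w) / (1 - (x : ℂ) * w)‖ < r) :
    |Complex.arg w| ≤ Real.arcsin (r / x * (1 - x ^ 2) / (1 - r ^ 2)) := by
  have hx0 : 0 < x := by linarith
  have hx : x ^ 2 ≤ 1 := by nlinarith
  have hD : r ^ 2 * x ^ 2 < 1 := by nlinarith
  have hxw : ‖(x : ℂ) * w‖ < 1 := by
    rw [norm_mul, norm_real, Real.norm_of_nonneg hx0.le]
    nlinarith [norm_nonneg w]
  have hden : 0 < ‖1 - (x : ℂ) * w‖ := by
    have := norm_sub_norm_le (1 : ℂ) (x * w)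
    rw [norm_one] at this
    linarith
  have hphb : ‖(x : ℂ) - w‖ < r * ‖1 - x * w‖ := by
    rwa [norm_div, div_lt_iff₀ hden] at hmem
  rw [← phbRadius_div_phbCenter hD.ne]
  exact abs_arg_le_arcsin_of_norm_sub_lt (phbRadius_le_phbCenter hr0.le (by linarith) hD)
    (norm_sub_phbCenter_lt_phbRadius hx hD hphb)

/-- If `0 < r < 1`, `x ∈ [0,1)` and `2r < x`, then every point `w` of the pseudohyperbolic
disk `D_phb(x,r)` satisfies `|arg w| ≤ arcsin((r/x)(1-x²)/(1-r²))`. -/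
theorem arg_bound_on_pseudohyperbolic_disk (x r : ℝ) (hr0 : 0 < r) (hr1 : r < 1)
    (hx1 : x < 1) (hrx : 2 * r < x) (w : ℂ) (hw : ‖w‖ < 1)
    (hmem : ‖((x : ℂ) - w) / (1 - (x : ℂ) * w)‖ < r) :
    |Complex.arg w| ≤ Real.arcsin (r / x * (1 - x ^ 2) / (1 - r ^ 2)) :=
  arg_bound_on_pseudohyperbolic_disk_general x r hr0 hx1 hrx w hw hmem
end

section
/- Fix r ∈ (0,1) and let z_{n,k} = (1-2^{-n})e^{2πik/2^n}. There exists N such that the characteristic functions of the pseudohyperbolic disks D_phb(z_{n,k}, r) satisfy ∑_{n,k} χ_{D_phb(z_{n,k},r)}(z) ≤ N for all z ∈ D. -/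
open Complex MeasureTheory
open scoped ENNReal

/-- The dyadic net `z_{n,k} = (1-2^{-n}) e^{2πik/2^n}` (`0 ≤ k < 2^n`). -/
noncomputable def dyadicNet (p : ℕ × ℕ) : ℂ :=
  ((1 - (2 : ℝ) ^ (-(p.1 : ℤ)) : ℝ) : ℂ) *
    Complex.exp (2 * Real.pi * Complex.I * (p.2 : ℂ) / (2 : ℂ) ^ p.1)

/-- The pseudohyperbolic disk of center `a` and radius `r`. -/
def pseudoDisk (a : ℂ) (r : ℝ) : Set ℂ :=
  {w : ℂ | ‖w‖ < 1 ∧ ‖(a - w) / (1 - (starRingEnd ℂ) a * w)‖ < r}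

/-!
If `z` lies in the pseudohyperbolic disk of radius `r` about `a`, the identity
`|1 - ā z|² - |a - z|² = (1 - |a|²)(1 - |z|²)` forces `1 - |z|` and `1 - |a|` to be comparable
and `|a - z| ≲ 1 - |a|`, with constants depending only on `r`. Since `1 - |z_{n,k}| = 2⁻ⁿ`, the
disks containing a given `z` have centres on boundedly many consecutive levels `n`. On level `n`
those centres lie within `O(2⁻ⁿ)` of `z`, while by Jordan's inequality two of them are at
distance `≳ 2⁻ⁿ` times the circular distance of their indices mod `2ⁿ`; so each level
contributes boundedly many disks.
-/

open Finset Real ComplexConjugate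

lemma Finset.card_le_of_forall_lt_add {s : Finset ℕ} {A : ℕ} (h : ∀ m ∈ s, ∀ n ∈ s, n < m + A) :
    #s ≤ A := by
  rcases s.eq_empty_or_nonempty with rfl | hs
  · simp
  calc #s ≤ #(Ico (s.min' hs) (s.min' hs + A)) :=
        card_le_card fun n hn => mem_Ico.2 ⟨s.min'_le n hn, h _ (s.min'_mem hs) n hn⟩
    _ = A := by simp

lemma ENNReal.tsum_indicator_one_le {ι α : Type*} (U : ι → Set α) (z : α) (N : ℕ)
    (h : ∀ F : Finset ι, (∀ i ∈ F, z ∈ U i) → #F ≤ N) :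
    ∑' i, (U i).indicator (fun _ => (1 : ℝ≥0∞)) z ≤ N := by
  classical
  rw [ENNReal.tsum_eq_iSup_sum]
  refine iSup_le fun F => ?_
  simp only [Set.indicator_apply, Finset.sum_boole]
  exact_mod_cast h _ fun i hi => (mem_filter.1 hi).2

lemma lt_add_of_mul_lt_two_pow_inv {c s : ℝ} {n m A : ℕ} (hc : 0 < c)
    (hA : ((2 : ℝ) ^ A)⁻¹ < c ^ 2) (hn : c * s < ((2 : ℝ) ^ n)⁻¹)
    (hm : c * ((2 : ℝ) ^ m)⁻¹ < s) : n < m + A := by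
  by_contra! h
  have hle : ((2 : ℝ) ^ n)⁻¹ ≤ ((2 : ℝ) ^ m)⁻¹ * ((2 : ℝ) ^ A)⁻¹ := by
    rw [← mul_inv, ← pow_add]
    exact inv_anti₀ (by positivity) (pow_le_pow_right₀ one_le_two h)
  have hm' := mul_lt_mul_of_pos_left hm hc
  nlinarith [mul_lt_mul_of_pos_left hA (by positivity : (0 : ℝ) < ((2 : ℝ) ^ m)⁻¹)]

namespace Complex

lemma norm_one_sub_conj_mul_sq_sub_norm_sub_sq (a z : ℂ) :
    ‖1 - conj a * z‖ ^ 2 - ‖a - z‖ ^ 2 = (1 - ‖a‖ ^ 2) * (1 - ‖z‖ ^ 2) := by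
  simp only [Complex.sq_norm, normSq_apply, sub_re, sub_im, mul_re, mul_im, one_re, one_im, conj_re,
    conj_im]
  ring

lemma one_sub_norm_mul_le_norm_one_sub_conj_mul (a z : ℂ) :
    1 - ‖a‖ * ‖z‖ ≤ ‖1 - conj a * z‖ := by
  simpa [norm_mul, RCLike.norm_conj] using norm_sub_norm_le (1 : ℂ) (conj a * z)

lemma norm_one_sub_conj_mul_le {a : ℂ} (ha : ‖a‖ ≤ 1) (z : ℂ) :
    ‖1 - conj a * z‖ ≤ 1 - ‖a‖ ^ 2 + ‖a‖ * ‖a - z‖ := by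
  have h : 1 - conj a * z = ((1 - ‖a‖ ^ 2 : ℝ) : ℂ) + conj a * (a - z) := by
    rw [ofReal_sub, ofReal_one, ofReal_pow, ← mul_conj', mul_comm]
    ring
  calc ‖1 - conj a * z‖ ≤ ‖((1 - ‖a‖ ^ 2 : ℝ) : ℂ)‖ + ‖conj a * (a - z)‖ :=
        h ▸ norm_add_le _ _
    _ = 1 - ‖a‖ ^ 2 + ‖a‖ * ‖a - z‖ := by
        rw [norm_real, Real.norm_of_nonneg (by nlinarith [norm_nonneg a]), norm_mul,
          RCLike.norm_conj]

lemma norm_ofReal_mul_exp_I_mul_sub (ρ α β : ℝ) :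
    ‖(ρ : ℂ) * exp (I * α) - ρ * exp (I * β)‖ = |ρ| * ‖exp (I * ↑(α - β)) - 1‖ := by
  have h : (ρ : ℂ) * exp (I * α) - ρ * exp (I * β)
      = ρ * exp (I * β) * (exp (I * ↑(α - β)) - 1) := by
    rw [mul_sub, mul_one, mul_assoc, ← exp_add]
    push_cast
    ring_nf
  rw [h, norm_mul, norm_mul, norm_exp_I_mul_ofReal, mul_one, norm_real, Real.norm_eq_abs]

lemma four_mul_abs_sub_round_le_norm_exp_I_mul_sub_one (x : ℝ) :
    4 * |x - round x| ≤ ‖exp (I * ↑(2 * π * x)) - 1‖ := by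
  have hsin : |Real.sin (π * x)| = |Real.sin (π * (x - round x))| := by
    rw [mul_sub, mul_comm π (round x : ℝ), sin_sub_int_mul_pi, abs_mul, abs_neg_one_zpow, one_mul]
  have hjordan : 2 / π * |π * (x - round x)| ≤ |Real.sin (π * (x - round x))| := by
    apply mul_abs_le_abs_sin
    rw [abs_mul, abs_of_pos pi_pos]
    nlinarith [abs_sub_round x, pi_pos]
  rw [norm_exp_I_mul_ofReal_sub_one, norm_mul, Real.norm_eq_abs, Real.norm_eq_abs,
    abs_two, show 2 * π * x / 2 = π * x by ring, hsin]
  rw [abs_mul, abs_of_pos pi_pos, ← mul_assoc, div_mul_cancel₀ _ pi_pos.ne'] at hjordan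
  linarith

end Complex

section PseudoDisk

variable {a z : ℂ} {r : ℝ}

lemma pos_of_mem_pseudoDisk (hz : z ∈ pseudoDisk a r) : 0 < r :=
  (norm_nonneg _).trans_lt hz.2

lemma norm_sub_lt_mul_of_mem_pseudoDisk (ha : ‖a‖ < 1) (hz : z ∈ pseudoDisk a r) :
    ‖a - z‖ < r * ‖1 - conj a * z‖ := by
  have hpos : 0 < ‖1 - conj a * z‖ := by
    have := Complex.one_sub_norm_mul_le_norm_one_sub_conj_mul a z
    nlinarith [norm_nonneg a, norm_nonneg z, hz.1]
  rw [← div_lt_iff₀ hpos, ← norm_div]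
  exact hz.2

lemma norm_sub_lt_of_mem_pseudoDisk (hr : r < 1) (ha : ‖a‖ < 1) (hz : z ∈ pseudoDisk a r) :
    ‖a - z‖ < 2 * r / (1 - r) * (1 - ‖a‖) := by
  have h := norm_sub_lt_mul_of_mem_pseudoDisk ha hz
  have hu := Complex.norm_one_sub_conj_mul_le ha.le z
  have hr0 := pos_of_mem_pseudoDisk hz
  have hdr : ‖a - z‖ < r * (1 - ‖a‖ ^ 2) + r * ‖a - z‖ := by
    nlinarith [mul_le_mul_of_nonneg_left hu hr0.le,
      mul_nonneg (mul_nonneg hr0.le (norm_nonneg (a - z))) (sub_nonneg.2 ha.le)]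
  have hfac : r * (1 - ‖a‖ ^ 2) ≤ 2 * r * (1 - ‖a‖) := by
    nlinarith [mul_nonneg hr0.le (sq_nonneg (1 - ‖a‖))]
  rw [div_mul_eq_mul_div, lt_div_iff₀ (by linarith)]
  linarith

lemma mul_norm_one_sub_conj_mul_sq_lt_of_mem_pseudoDisk (ha : ‖a‖ < 1) (hz : z ∈ pseudoDisk a r) :
    (1 - r ^ 2) * ‖1 - conj a * z‖ ^ 2 < 4 * ((1 - ‖a‖) * (1 - ‖z‖)) := by
  have h := norm_sub_lt_mul_of_mem_pseudoDisk ha hz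
  have hid := Complex.norm_one_sub_conj_mul_sq_sub_norm_sub_sq a z
  have hsq : ‖a - z‖ ^ 2 < (r * ‖1 - conj a * z‖) ^ 2 :=
    pow_lt_pow_left₀ h (norm_nonneg _) two_ne_zero
  have hfac : (1 - ‖a‖ ^ 2) * (1 - ‖z‖ ^ 2) ≤ 4 * ((1 - ‖a‖) * (1 - ‖z‖)) := by
    have h1 := mul_nonneg (sub_nonneg.2 ha.le) (sub_nonneg.2 hz.1.le)
    have h2 : (1 + ‖a‖) * (1 + ‖z‖) ≤ 4 := by nlinarith [norm_nonneg a, norm_nonneg z]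
    nlinarith [mul_nonneg h1 (sub_nonneg.2 h2)]
  nlinarith

lemma mul_one_sub_norm_lt_of_mem_pseudoDisk (hr : r < 1) (ha : ‖a‖ < 1) (hz : z ∈ pseudoDisk a r) :
    (1 - r ^ 2) / 4 * (1 - ‖a‖) < 1 - ‖z‖ ∧ (1 - r ^ 2) / 4 * (1 - ‖z‖) < 1 - ‖a‖ := by
  have h := mul_norm_one_sub_conj_mul_sq_lt_of_mem_pseudoDisk ha hz
  have hu := Complex.one_sub_norm_mul_le_norm_one_sub_conj_mul a z
  have hr2 : 0 ≤ 1 - r ^ 2 := by nlinarith [pos_of_mem_pseudoDisk hz]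
  have key : ∀ {s t : ℝ}, 0 < s → s ≤ ‖1 - conj a * z‖ →
      (1 - r ^ 2) * ‖1 - conj a * z‖ ^ 2 < 4 * (s * t) → (1 - r ^ 2) / 4 * s < t := by
    intro s t hs hsu hlt
    have := mul_le_mul_of_nonneg_left (pow_le_pow_left₀ hs.le hsu 2) hr2
    nlinarith
  have hA := norm_nonneg a
  have hZ := norm_nonneg z
  constructor
  · exact key (by linarith) (by nlinarith [hz.1]) h
  · exact key (by linarith [hz.1]) (by nlinarith) (mul_comm (1 - ‖a‖) _ ▸ h)

end PseudoDisk

lemma dyadicNet_mk (n k : ℕ) :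
    dyadicNet (n, k) = ((1 - ((2 : ℝ) ^ n)⁻¹ : ℝ) : ℂ) * exp (I * ↑(2 * π * (k / 2 ^ n))) := by
  simp only [dyadicNet, zpow_neg, zpow_natCast]
  push_cast
  ring_nf

lemma one_sub_norm_dyadicNet (p : ℕ × ℕ) : 1 - ‖dyadicNet p‖ = ((2 : ℝ) ^ p.1)⁻¹ := by
  have h : ((2 : ℝ) ^ p.1)⁻¹ ≤ 1 := inv_le_one_of_one_le₀ (one_le_pow₀ one_le_two)
  rw [← Prod.mk.eta (p := p), dyadicNet_mk, norm_mul, norm_exp_I_mul_ofReal, mul_one, norm_real,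
    Real.norm_of_nonneg (sub_nonneg.2 h)]
  ring

lemma norm_dyadicNet_lt_one (p : ℕ × ℕ) : ‖dyadicNet p‖ < 1 := by
  have := one_sub_norm_dyadicNet p
  have : 0 < ((2 : ℝ) ^ p.1)⁻¹ := by positivity
  linarith

lemma norm_dyadicNet_sub_dyadicNet (n k k' : ℕ) :
    ‖dyadicNet (n, k) - dyadicNet (n, k')‖
      = (1 - ((2 : ℝ) ^ n)⁻¹) * ‖exp (I * ↑(2 * π * ((k - k') / 2 ^ n))) - 1‖ := by
  have h : ((2 : ℝ) ^ n)⁻¹ ≤ 1 := inv_le_one_of_one_le₀ (one_le_pow₀ one_le_two)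
  rw [dyadicNet_mk, dyadicNet_mk, norm_ofReal_mul_exp_I_mul_sub, abs_of_nonneg (sub_nonneg.2 h)]
  congr 6
  ring

lemma exists_int_emod_eq_of_norm_dyadicNet_sub_lt {n k k' : ℕ} {ρ : ℝ} (hk : k < 2 ^ n)
    (h : ‖dyadicNet (n, k) - dyadicNet (n, k')‖ < 2 * ρ * ((2 : ℝ) ^ n)⁻¹) :
    ∃ j : ℤ, |(j : ℝ)| < ρ ∧ (k : ℤ) = (k' + j) % 2 ^ n := by
  rcases n.eq_zero_or_pos with rfl | hn
  · refine ⟨0, ?_, ?_⟩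
    · simp only [Int.cast_zero, abs_zero]
      linarith [norm_nonneg (dyadicNet (0, k) - dyadicNet (0, k')), pow_zero (2 : ℝ)]
    · simp_all
  set x : ℝ := ((k : ℝ) - k') / 2 ^ n with hx
  have h2n : (2 : ℝ) ≤ 2 ^ n := le_self_pow₀ one_le_two hn.ne'
  have hround : |x - round x| * 2 ^ n < ρ := by
    have hchord := mul_le_mul_of_nonneg_left (four_mul_abs_sub_round_le_norm_exp_I_mul_sub_one x)
      (sub_nonneg.2 ((inv_le_one_of_one_le₀ (one_le_two.trans h2n))))
    rw [← norm_dyadicNet_sub_dyadicNet] at hchord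
    have ht : ((2 : ℝ) ^ n)⁻¹ ≤ 1 / 2 := by
      rw [one_div]; exact inv_anti₀ two_pos h2n
    have hy : |x - round x| < ρ * ((2 : ℝ) ^ n)⁻¹ := by
      nlinarith [abs_nonneg (x - round x)]
    rwa [lt_mul_inv_iff₀ (by positivity)] at hy
  refine ⟨k - k' - round x * 2 ^ n, ?_, ?_⟩
  · have hcast : ((k - k' - round x * 2 ^ n : ℤ) : ℝ) = (x - round x) * 2 ^ n := by
      rw [hx]; push_cast; field_simp
    rwa [hcast, abs_mul, abs_of_pos (by positivity : (0 : ℝ) < 2 ^ n)]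
  · rw [show (k' : ℤ) + (k - k' - round x * 2 ^ n) = k + -round x * 2 ^ n by ring,
      Int.add_mul_emod_self_right, Int.emod_eq_of_lt (by positivity) (by exact_mod_cast hk)]

lemma card_le_of_forall_norm_dyadicNet_sub_lt {n : ℕ} {w : ℂ} {ρ : ℝ} {G : Finset ℕ}
    (hG : ∀ k ∈ G, k < 2 ^ n ∧ ‖dyadicNet (n, k) - w‖ < ρ * ((2 : ℝ) ^ n)⁻¹) :
    #G ≤ 2 * ⌈ρ⌉₊ + 1 := by
  rcases G.eq_empty_or_nonempty with rfl | ⟨k₀, hk₀⟩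
  · simp
  have hwindow : G ⊆ (Icc (-⌈ρ⌉₊ : ℤ) ⌈ρ⌉₊).image fun j : ℤ => ((k₀ + j) % 2 ^ n).toNat := by
    intro k hk
    have hclose : ‖dyadicNet (n, k) - dyadicNet (n, k₀)‖ < 2 * ρ * ((2 : ℝ) ^ n)⁻¹ := by
      have := norm_sub_le_norm_sub_add_norm_sub (dyadicNet (n, k)) w (dyadicNet (n, k₀))
      rw [norm_sub_rev w] at this
      linarith [(hG k hk).2, (hG k₀ hk₀).2]
    obtain ⟨j, hjρ, hj⟩ := exists_int_emod_eq_of_norm_dyadicNet_sub_lt (hG k hk).1 hclose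
    have hjJ : |j| ≤ ⌈ρ⌉₊ := by
      exact_mod_cast hjρ.le.trans (Nat.le_ceil ρ)
    exact mem_image.2 ⟨j, mem_Icc.2 (abs_le.1 hjJ), by rw [← hj, Int.toNat_natCast]⟩
  calc #G ≤ #(Icc (-⌈ρ⌉₊ : ℤ) ⌈ρ⌉₊) := (card_le_card hwindow).trans card_image_le
    _ = 2 * ⌈ρ⌉₊ + 1 := by rw [Int.card_Icc]; omega

lemma card_filter_fst_eq_le {w : ℂ} {ρ : ℝ} {F : Finset {q : ℕ × ℕ // q.2 < 2 ^ q.1}}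
    (hF : ∀ p ∈ F, ‖dyadicNet p - w‖ < ρ * ((2 : ℝ) ^ p.1.1)⁻¹) (n : ℕ) :
    #{p ∈ F | p.1.1 = n} ≤ 2 * ⌈ρ⌉₊ + 1 := by
  have hinj : Set.InjOn (fun p : {q : ℕ × ℕ // q.2 < 2 ^ q.1} => p.1.2)
      ({p ∈ F | p.1.1 = n} : Finset _) := by
    intro p hp p' hp' hpp'
    rw [coe_filter] at hp hp'
    exact Subtype.ext (Prod.ext (hp.2.trans hp'.2.symm) hpp')
  rw [← card_image_of_injOn hinj]
  refine card_le_of_forall_norm_dyadicNet_sub_lt (n := n) (w := w) fun k hk => ?_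
  obtain ⟨p, hp, rfl⟩ := mem_image.1 hk
  obtain ⟨hpF, rfl⟩ := mem_filter.1 hp
  exact ⟨p.2, hF p hpF⟩

/-- Finite overlap: for fixed `r ∈ (0,1)` there is `N` such that the sum of characteristic
functions of the pseudohyperbolic disks `D_phb(z_{n,k}, r)` is at most `N` on `D`. -/
theorem finite_overlap_of_pseudohyperbolic_disks (r : ℝ) (hr0 : 0 < r) (hr1 : r < 1) :
    ∃ N : ℕ, ∀ z : ℂ, ‖z‖ < 1 →
      (∑' p : {q : ℕ × ℕ // q.2 < 2 ^ q.1},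
          Set.indicator (pseudoDisk (dyadicNet p) r) (fun _ => (1 : ℝ≥0∞)) z) ≤ N := by
  have hc : 0 < (1 - r ^ 2) / 4 := by nlinarith
  set c := (1 - r ^ 2) / 4
  obtain ⟨A, hA⟩ := exists_pow_lt_of_lt_one (pow_pos hc 2) (by norm_num : (2⁻¹ : ℝ) < 1)
  rw [inv_pow] at hA
  refine ⟨(2 * ⌈2 * r / (1 - r)⌉₊ + 1) * A, fun z _ => ENNReal.tsum_indicator_one_le _ z _
    fun F hF => ?_⟩
  have hnear (p) (hp : p ∈ F) :
      ‖dyadicNet p - z‖ < 2 * r / (1 - r) * ((2 : ℝ) ^ p.1.1)⁻¹ := by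
    simpa [one_sub_norm_dyadicNet] using
      norm_sub_lt_of_mem_pseudoDisk hr1 (norm_dyadicNet_lt_one p) (hF p hp)
  have hlevel (p) (hp : p ∈ F) :
      c * ((2 : ℝ) ^ p.1.1)⁻¹ < 1 - ‖z‖ ∧ c * (1 - ‖z‖) < ((2 : ℝ) ^ p.1.1)⁻¹ := by
    simpa [one_sub_norm_dyadicNet] using
      mul_one_sub_norm_lt_of_mem_pseudoDisk hr1 (norm_dyadicNet_lt_one p) (hF p hp)
  have hspread : ∀ m ∈ F.image (·.1.1), ∀ n ∈ F.image (·.1.1), n < m + A := by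
    simp only [mem_image]
    rintro _ ⟨q, hq, rfl⟩ _ ⟨p, hp, rfl⟩
    exact lt_add_of_mul_lt_two_pow_inv hc hA (hlevel p hp).2 (hlevel q hq).1
  calc #F ≤ (2 * ⌈2 * r / (1 - r)⌉₊ + 1) * #(F.image (·.1.1)) :=
        card_le_mul_card_image _ _ fun n _ => card_filter_fst_eq_le hnear n
    _ ≤ (2 * ⌈2 * r / (1 - r)⌉₊ + 1) * A := Nat.mul_le_mul_left _ (card_le_of_forall_lt_add hspread)
end
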